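/- arXiv:0805.2144 — 3 statements merged into one kernel-verified Lean document; each statement's English description precedes it below -/
import Mathlib

section
/- The j-invariant of the elliptic curve E_6(t): y^2 + (t+1)xy + (t - t^2)y = x^3 + (t - t^2)x^2 over Q(t) equals (3t - 1)^3 (3t^3 - 3t^2 + 9t - 1)^3 / ((t - 1)^3 t^6 (9t - 1)). -/
/-!
`E₆(t)` is Kubert's Tate normal form `y² + (1 - c)xy - by = x³ - bx²` with `b = c + c²` (the
family on which `(0, 0)` has order 6), taken at `c = -t`. For that family
`c₄ = (3c + 1)(3c³ + 3c² + 9c + 1)` and `Δ = c⁶ (c + 1)³ (9c + 1)`, by direct computation of the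
Weierstrass invariants; the factors of `Δ` are nonzero in `ℚ(t)` because `t` is transcendental
over `ℚ`.
-/

open WeierstrassCurve

/-- The elliptic curve `E₆(t) : y² + (t+1)xy + (t-t²)y = x³ + (t-t²)x²` over `ℚ(t)`. -/
noncomputable def E6 : WeierstrassCurve (RatFunc ℚ) :=
  { a₁ := RatFunc.X + 1
    a₂ := RatFunc.X - (RatFunc.X) ^ 2
    a₃ := RatFunc.X - (RatFunc.X) ^ 2
    a₄ := 0
    a₆ := 0 }

namespace WeierstrassCurve

variable {R : Type*} [CommRing R]

def tateNormal (b c : R) : WeierstrassCurve R :=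
  { a₁ := 1 - c, a₂ := -b, a₃ := -b, a₄ := 0, a₆ := 0 }

lemma tateNormal_c₄ (b c : R) :
    (tateNormal b c).c₄ = ((1 - c) ^ 2 - 4 * b) ^ 2 + 24 * b * (1 - c) := by
  simp only [tateNormal, c₄, b₂, b₄]
  ring

lemma tateNormal_Δ (b c : R) :
    (tateNormal b c).Δ =
      b ^ 3 * (16 * b ^ 2 - b * (8 * c ^ 2 + 20 * c - 1) - c * (1 - c) ^ 3) := by
  simp only [tateNormal, Δ, b₂, b₄, b₆, b₈]
  ring

lemma tateNormal_add_sq_c₄ (c : R) :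
    (tateNormal (c + c ^ 2) c).c₄ = (3 * c + 1) * (3 * c ^ 3 + 3 * c ^ 2 + 9 * c + 1) := by
  rw [tateNormal_c₄]
  ring

lemma tateNormal_add_sq_Δ (c : R) :
    (tateNormal (c + c ^ 2) c).Δ = c ^ 6 * (c + 1) ^ 3 * (9 * c + 1) := by
  rw [tateNormal_Δ]
  ring

end WeierstrassCurve

namespace RatFunc

lemma X_sub_C_ne_zero {K : Type*} [Field K] (a : K) : (X : K⟮X⟯) - C a ≠ 0 := by
  rw [sub_ne_zero, ← algebraMap_eq_C]
  exact fun h => transcendental_X (h ▸ isAlgebraic_algebraMap a)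

end RatFunc

open RatFunc

/-- The j-invariant `c₄³/Δ` of the elliptic curve
`E₆(t) : y² + (t+1)xy + (t-t²)y = x³ + (t-t²)x²` over `ℚ(t)` equals
`(3t - 1)³ (3t³ - 3t² + 9t - 1)³ / ((t - 1)³ t⁶ (9t - 1))`.  (In particular the
discriminant is nonzero, so `E₆(t)` is indeed an elliptic curve over `ℚ(t)`.) -/
theorem E6_j_invariant :
    E6.Δ ≠ 0 ∧
    E6.c₄ ^ 3 / E6.Δ =
      (3 * RatFunc.X - 1) ^ 3 *
          (3 * (RatFunc.X) ^ 3 - 3 * (RatFunc.X) ^ 2 + 9 * RatFunc.X - 1) ^ 3 /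
        ((RatFunc.X - 1) ^ 3 * (RatFunc.X) ^ 6 * (9 * RatFunc.X - 1)) := by
  have hE6 : E6 = tateNormal (-X + (-X) ^ 2) (-X) := by
    ext <;> simp only [E6, tateNormal] <;> ring
  have hΔ : E6.Δ = (X - 1) ^ 3 * X ^ 6 * (9 * X - 1) := by
    rw [hE6, tateNormal_add_sq_Δ]
    ring
  have hc₄ : E6.c₄ = (1 - 3 * X) * (1 - 9 * X + 3 * X ^ 2 - 3 * X ^ 3) := by
    rw [hE6, tateNormal_add_sq_c₄]
    ring
  have hX_sub_one : (X - 1 : ℚ⟮X⟯) ≠ 0 := by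
    simpa using X_sub_C_ne_zero (1 : ℚ)
  have hnine_mul_X_sub_one : (9 * X - 1 : ℚ⟮X⟯) ≠ 0 := by
    have h : (9 * X - 1 : ℚ⟮X⟯) = 9 * (X - C 9⁻¹) := by
      rw [map_inv₀, map_ofNat]
      field_simp
    rw [h]
    exact mul_ne_zero (by norm_num) (X_sub_C_ne_zero _)
  refine ⟨?_, by rw [hc₄, hΔ]; ring⟩
  rw [hΔ]
  exact mul_ne_zero (mul_ne_zero (pow_ne_zero _ hX_sub_one) (pow_ne_zero _ X_ne_zero))
    hnine_mul_X_sub_one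
end

section
/- Let m(t) = (1-9t)/(24t) as a rational function over Q. If r and t are nonzero elements of a field of characteristic zero with t ≠ 1 and r^3 = m(t), then (1/(2r))^3 = m((1-9t)/(9-9t)). That is, the involution t ↦ (1-9t)/(9-9t) lifts through the cubic cover r^3 = (1-9t)/(24t) to r ↦ 1/(2r). -/
/-!
Both `m((1-9t)/(9-9t))` and `1/(8 m(t))` equal `3t/(1-9t)`, while `(1/(2r))³ = 1/(8r³)`.
-/

namespace CubicCover

variable {K : Type*} [Field K]

def cubicCoverMap (t : K) : K := (1 - 9 * t) / (24 * t)

def baseInvolution (t : K) : K := (1 - 9 * t) / (9 - 9 * t)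

theorem cubicCoverMap_baseInvolution {t : K} (h24 : (24 : K) ≠ 0)
    (ht1 : t ≠ 1) (h9 : 1 - 9 * t ≠ 0) :
    cubicCoverMap (baseInvolution t) = (8 * cubicCoverMap t)⁻¹ := by
  obtain ⟨h3, h8⟩ : (3 : K) ≠ 0 ∧ (8 : K) ≠ 0 :=
    mul_ne_zero_iff.mp (by rwa [show (3 : K) * 8 = 24 by norm_num])
  have h99 : (9 : K) - 9 * t ≠ 0 := by
    rw [show (9 : K) - 9 * t = 3 * 3 * (1 - t) by ring]
    exact mul_ne_zero (mul_ne_zero h3 h3) (sub_ne_zero.mpr ht1.symm)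
  have h9' : (9 : K) ≠ 0 := by simpa [show (9 : K) = 3 * 3 by norm_num] using h3
  unfold cubicCoverMap baseInvolution
  field_simp
  ring

end CubicCover

open CubicCover in
theorem involution_lift_18_3_2_general {K : Type*} [Field K] (r t : K)
    (hr : r ≠ 0) (ht1 : t ≠ 1)
    (h : r ^ 3 = (1 - 9 * t) / (24 * t)) :
    (1 / (2 * r)) ^ 3 =
      (1 - 9 * ((1 - 9 * t) / (9 - 9 * t))) / (24 * ((1 - 9 * t) / (9 - 9 * t))) := by
  change r ^ 3 = cubicCoverMap t at h
  -- `x / 0 = 0`, so `r ≠ 0` forces both `1 - 9t` and `24t` to be nonzero.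
  obtain ⟨h9, h24t⟩ := div_ne_zero_iff.mp (h ▸ pow_ne_zero 3 hr)
  have h24 : (24 : K) ≠ 0 := left_ne_zero_of_mul h24t
  calc (1 / (2 * r)) ^ 3 = (8 * r ^ 3)⁻¹ := by
        rw [one_div, inv_pow, mul_pow]; norm_num
    _ = cubicCoverMap (baseInvolution t) := by
      rw [h, cubicCoverMap_baseInvolution h24 ht1 h9]

/-- For the cubic cover `r³ = m(t)` with `m(t) = (1-9t)/(24t)` (corresponding to the
noncongruence subgroup `Γ_{18.3⁴.2³} ⊂ Γ₁(6)`), the involution `t ↦ (1-9t)/(9-9t)`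
of the base lifts to `r ↦ 1/(2r)`: if `r, t` are nonzero, `t ≠ 1` and
`r³ = (1-9t)/(24t)` in a field of characteristic zero, then
`(1/(2r))³ = m((1-9t)/(9-9t))`. -/
theorem involution_lift_18_3_2 {K : Type*} [Field K] [CharZero K] (r t : K)
    (hr : r ≠ 0) (ht0 : t ≠ 0) (ht1 : t ≠ 1)
    (h : r ^ 3 = (1 - 9 * t) / (24 * t)) :
    (1 / (2 * r)) ^ 3 =
      (1 - 9 * ((1 - 9 * t) / (9 - 9 * t))) / (24 * ((1 - 9 * t) / (9 - 9 * t))) :=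
  involution_lift_18_3_2_general r t hr ht1 h
end

section
/- Let j_8(t) = -16(t^4 - 16t^2 + 16)^3/(t^8(t+1)(t-1)) in Q(t), the j-invariant of the family E_8(t). Then the curves E_8(t) and E_8(1/t) are related by a 4-isogeny; concretely, Φ_4(j_8(t), j_8(1/t)) = 0 as an identity in Q(t), where Φ_4 is the classical modular polynomial of level 4. -/
/-- The classical modular polynomial `Φ₂` of level 2, evaluated at a pair of elements
of a commutative ring: the polynomial in `ℤ[X,Y]` vanishing exactly on pairs of
j-invariants of elliptic curves related by a cyclic 2-isogeny. -/
def Phi2 {R : Type*} [CommRing R] (X Y : R) : R :=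
  X ^ 3 + Y ^ 3 - X ^ 2 * Y ^ 2 + 1488 * (X ^ 2 * Y + X * Y ^ 2)
    - 162000 * (X ^ 2 + Y ^ 2) + 40773375 * X * Y + 8748000000 * (X + Y)
    - 157464000000000

/-- The classical modular polynomial `Φ₄` of level 4, evaluated at a pair of elements
of a commutative ring: the polynomial in `ℤ[X,Y]` vanishing exactly on pairs of
j-invariants of elliptic curves related by a cyclic 4-isogeny.  It satisfies
`Res_Z (Φ₂(X,Z), Φ₂(Z,Y)) = -(X - Y)³ · Φ₄(X,Y)`, expressing the fact that cyclic
4-isogenies are chains of two 2-isogenies. -/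
def Phi4 {R : Type*} [CommRing R] (X Y : R) : R :=
  X ^ 6 + Y ^ 6 - (X ^ 5 * Y ^ 4 + X ^ 4 * Y ^ 5)
    + 2976 * (X ^ 5 * Y ^ 3 + X ^ 3 * Y ^ 5)
    - 2533680 * (X ^ 5 * Y ^ 2 + X ^ 2 * Y ^ 5)
    + 561444609 * (X ^ 5 * Y + X * Y ^ 5)
    - 8507430000 * (X ^ 5 + Y ^ 5)
    + 7440 * (X ^ 4 * Y ^ 4)
    + 80967606480 * (X ^ 4 * Y ^ 3 + X ^ 3 * Y ^ 4)
    + 1425220456750080 * (X ^ 4 * Y ^ 2 + X ^ 2 * Y ^ 4)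
    + 1194227244109980000 * (X ^ 4 * Y + X * Y ^ 4)
    + 24125474716854750000 * (X ^ 4 + Y ^ 4)
    + 2729942049541120 * (X ^ 3 * Y ^ 3)
    - 914362550706103200000 * (X ^ 3 * Y ^ 2 + X ^ 2 * Y ^ 3)
    + 12519806366846423598750000 * (X ^ 3 * Y + X * Y ^ 3)
    - 22805180351548032195000000000 * (X ^ 3 + Y ^ 3)
    + 26402314839969410496000000 * (X ^ 2 * Y ^ 2)
    + 188656639464998455284287109375 * (X ^ 2 * Y + X * Y ^ 2)
    + 158010236947953767724187500000000 * (X ^ 2 + Y ^ 2)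
    - 94266583063223403127324218750000 * (X * Y)
    - 364936327796757658404375000000000000 * (X + Y)
    + 280949374722195372109640625000000000000

/-- The j-invariant of the family `E₈(t)`, as a rational function of `t`. -/
noncomputable def j8 (t : RatFunc ℚ) : RatFunc ℚ :=
  -16 * (t ^ 4 - 16 * t ^ 2 + 16) ^ 3 / (t ^ 8 * (t + 1) * (t - 1))


set_option maxHeartbeats 1000000 in
lemma Phi4_div_div {K : Type*} [Field K] (p q r w : K) (hq : q ≠ 0) (hw : w ≠ 0) :
    Phi4 (p / q) (r / w) =
      (p ^ 6 * w ^ 6 + r ^ 6 * q ^ 6 - (p ^ 5 * q * r ^ 4 * w ^ 2 + p ^ 4 * q ^ 2 * r ^ 5 * w)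
        + 2976 * (p ^ 5 * q * r ^ 3 * w ^ 3 + p ^ 3 * q ^ 3 * r ^ 5 * w)
        - 2533680 * (p ^ 5 * q * r ^ 2 * w ^ 4 + p ^ 2 * q ^ 4 * r ^ 5 * w)
        + 561444609 * (p ^ 5 * q * r * w ^ 5 + p * q ^ 5 * r ^ 5 * w)
        - 8507430000 * (p ^ 5 * q * w ^ 6 + q ^ 6 * r ^ 5 * w)
        + 7440 * (p ^ 4 * q ^ 2 * r ^ 4 * w ^ 2)
        + 80967606480 * (p ^ 4 * q ^ 2 * r ^ 3 * w ^ 3 + p ^ 3 * q ^ 3 * r ^ 4 * w ^ 2)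
        + 1425220456750080 * (p ^ 4 * q ^ 2 * r ^ 2 * w ^ 4 + p ^ 2 * q ^ 4 * r ^ 4 * w ^ 2)
        + 1194227244109980000 * (p ^ 4 * q ^ 2 * r * w ^ 5 + p * q ^ 5 * r ^ 4 * w ^ 2)
        + 24125474716854750000 * (p ^ 4 * q ^ 2 * w ^ 6 + q ^ 6 * r ^ 4 * w ^ 2)
        + 2729942049541120 * (p ^ 3 * q ^ 3 * r ^ 3 * w ^ 3)
        - 914362550706103200000 * (p ^ 3 * q ^ 3 * r ^ 2 * w ^ 4 + p ^ 2 * q ^ 4 * r ^ 3 * w ^ 3)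
        + 12519806366846423598750000 * (p ^ 3 * q ^ 3 * r * w ^ 5 + p * q ^ 5 * r ^ 3 * w ^ 3)
        - 22805180351548032195000000000 * (p ^ 3 * q ^ 3 * w ^ 6 + q ^ 6 * r ^ 3 * w ^ 3)
        + 26402314839969410496000000 * (p ^ 2 * q ^ 4 * r ^ 2 * w ^ 4)
        + 188656639464998455284287109375 * (p ^ 2 * q ^ 4 * r * w ^ 5 + p * q ^ 5 * r ^ 2 * w ^ 4)
        + 158010236947953767724187500000000 * (p ^ 2 * q ^ 4 * w ^ 6 + q ^ 6 * r ^ 2 * w ^ 4)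
        - 94266583063223403127324218750000 * (p * q ^ 5 * r * w ^ 5)
        - 364936327796757658404375000000000000 * (p * q ^ 5 * w ^ 6 + q ^ 6 * r * w ^ 5)
        + 280949374722195372109640625000000000000 * (q ^ 6 * w ^ 6))
      / (q ^ 6 * w ^ 6) := by
  have ha : p / q * q = p := div_mul_cancel₀ _ hq
  have hb : r / w * w = r := div_mul_cancel₀ _ hw
  rw [eq_div_iff (mul_ne_zero (pow_ne_zero _ hq) (pow_ne_zero _ hw)), Phi4]
  set a := p / q with hadef
  set b := r / w with hbdef
  rw [← ha, ← hb]
  ring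

set_option maxHeartbeats 4000000 in
/-- `Φ₄(j₈(t), j₈(1/t)) = 0` as an identity in `ℚ(t)`: the curves `E₈(t)` and
`E₈(1/t)` are related by a cyclic 4-isogeny (a chain of two 2-isogenies, in the
sense of the modular polynomial `Φ₂`). -/
theorem E8_four_isogeny :
    Phi4 (j8 RatFunc.X) (j8 (1 / RatFunc.X)) = 0 := by
  have hX : (RatFunc.X : RatFunc ℚ) ≠ 0 := RatFunc.X_ne_zero
  have h1 : (RatFunc.X + 1 : RatFunc ℚ) ≠ 0 := by
    have h : (RatFunc.X + 1 : RatFunc ℚ) = algebraMap (Polynomial ℚ) _ (Polynomial.X + 1) := by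
      simp [RatFunc.algebraMap_X]
    rw [h]
    exact RatFunc.algebraMap_ne_zero (by intro h; simpa using congrArg (Polynomial.eval 0) h)
  have h2 : (RatFunc.X - 1 : RatFunc ℚ) ≠ 0 := by
    have h : (RatFunc.X - 1 : RatFunc ℚ) = algebraMap (Polynomial ℚ) _ (Polynomial.X - 1) := by
      simp [RatFunc.algebraMap_X]
    rw [h]
    exact RatFunc.algebraMap_ne_zero (by intro h; simpa using congrArg (Polynomial.eval 0) h)
  have hs : (RatFunc.X : RatFunc ℚ) ^ 2 ≠ 0 := pow_ne_zero _ hX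
  have hs1 : (RatFunc.X : RatFunc ℚ) ^ 2 - 1 ≠ 0 := by
    intro h
    rcases mul_eq_zero.mp (show (RatFunc.X + 1) * (RatFunc.X - 1) = 0 by rw [← h]; ring) with
      h' | h'
    · exact h1 h'
    · exact h2 h'
  have keyA : j8 RatFunc.X =
      -16 * ((RatFunc.X ^ 2) ^ 2 - 16 * RatFunc.X ^ 2 + 16) ^ 3 /
        ((RatFunc.X ^ 2) ^ 4 * (RatFunc.X ^ 2 - 1)) := by
    rw [j8, div_eq_div_iff (mul_ne_zero (mul_ne_zero (pow_ne_zero _ hX) h1) h2)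
      (mul_ne_zero (pow_ne_zero _ hs) hs1)]
    ring
  have keyB : j8 (1 / RatFunc.X) =
      -16 * (16 * (RatFunc.X ^ 2) ^ 2 - 16 * RatFunc.X ^ 2 + 1) ^ 3 /
        (-(RatFunc.X ^ 2 * (RatFunc.X ^ 2 - 1))) := by
    rw [j8, one_div, div_eq_div_iff]
    · field_simp
      ring
    · apply mul_ne_zero (mul_ne_zero (pow_ne_zero _ (inv_ne_zero hX)) _) _
      · intro h
        apply h1
        have hh : (RatFunc.X : RatFunc ℚ)⁻¹ + 1 = (1 + RatFunc.X) / RatFunc.X := by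
          rw [add_div, div_self hX, one_div]
        rw [hh, div_eq_zero_iff] at h
        rcases h with h | h
        · rw [add_comm] at h; exact h
        · exact absurd h hX
      · intro h
        apply h2
        have hh : (RatFunc.X : RatFunc ℚ)⁻¹ - 1 = (1 - RatFunc.X) / RatFunc.X := by
          rw [sub_div, div_self hX, one_div]
        rw [hh, div_eq_zero_iff] at h
        rcases h with h | h
        · rw [← neg_eq_zero, ← h]; ring
        · exact absurd h hX
    · exact neg_ne_zero.mpr (mul_ne_zero hs hs1)
  rw [keyA, keyB]
  generalize (RatFunc.X : RatFunc ℚ) ^ 2 = s at hs hs1 ⊢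
  rw [Phi4_div_div _ _ _ _ (mul_ne_zero (pow_ne_zero _ hs) hs1)
    (neg_ne_zero.mpr (mul_ne_zero hs hs1)), div_eq_zero_iff]
  left
  ring
end
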